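/- Let Q be the GHZ query distribution (uniform on {x ∈ F_2^3 : x1+x2+x3=0}), let n > m be positive integers, and let W be an affine shift of V^3 for a subspace V ≤ F_2^{1×n} of codimension m with Q^n(W) > 0. Then there exist at least n − m distinct coordinates j ∈ [n] for which Q is locally embeddable in the j-th coordinate of P̃ = Q^n | W. -/

import Mathlib

/-!
Let `J` be the set of coordinates on which some vector of `V` is nonzero. Restriction to `J` is
injective on `V`, so `#J ≥ dim V = n - m`. For `j ∈ J` pick `w ∈ V` with `w j = 1`. The shared
randomness is a uniform sample `t` of the support `T` of `Qⁿ | W`, and player `i` answers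
`tᵢ + (qᵢ + tᵢⱼ) • w`: the `j`-th column becomes `q`, and the answer stays in `T` because
`q + t_{·j}` lies in `𝒬` and `w ∈ V`. Conversely an answer `x ∈ T` comes exactly from the pairs
`(x_{·j}, x + (c + x_{·j}) ⊗ w)` with `c ∈ 𝒬`, so it has `#𝒬 = 4` preimages and the answers are
uniform on `T`.
-/

open Finset

open scoped Classical in
/-- `Q` (the GHZ query distribution, uniform on `𝒬 = {q ∈ F₂³ : q₁+q₂+q₃=0}`) is
locally embeddable in the `j`-th coordinate of the distribution `P̃` uniform on a
support `T ⊆ F₂^{3×n}`: there is a finite shared-randomness distribution `ρ` and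
local functions `e₁, e₂, e₃ : F₂ × ℛ → F₂ⁿ` such that for `q ← Q`, `r ← ρ`
independent, the matrix with rows `eᵢ(qᵢ, r)` has law exactly `P̃`, and its `j`-th
column always equals `q`. -/
def LocallyEmbeddable (n : ℕ) (T : Finset (Fin 3 → Fin n → ZMod 2)) (j : Fin n) :
    Prop :=
  ∃ (k : ℕ) (ρ : Fin k → ℝ) (e : Fin 3 → ZMod 2 → Fin k → Fin n → ZMod 2),
    (∀ r, 0 ≤ ρ r) ∧ (∑ r, ρ r = 1) ∧
    (∀ q : Fin 3 → ZMod 2, q 0 + q 1 + q 2 = 0 → ∀ r i, e i (q i) r j = q i) ∧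
    (∀ x : Fin 3 → Fin n → ZMod 2,
      ∑ q ∈ Finset.univ.filter (fun q : Fin 3 → ZMod 2 => q 0 + q 1 + q 2 = 0),
        ∑ r, (if (fun i => e i (q i) r) = x then (1 / 4 : ℝ) * ρ r else 0) =
      if x ∈ T then 1 / (T.card : ℝ) else 0)

theorem Submodule.finrank_le_card_support {K ι : Type*} [Field K] [Fintype ι]
    (V : Submodule K (ι → K)) [DecidablePred fun j => ∃ w ∈ V, w j ≠ 0] :
    Module.finrank K V ≤ #{j | ∃ w ∈ V, w j ≠ 0} := by
  set J := univ.filter fun j => ∃ w ∈ V, w j ≠ 0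
  have hinj : Function.Injective (LinearMap.funLeft K K ((↑) : J → ι) ∘ₗ V.subtype) := by
    rw [← LinearMap.ker_eq_bot, LinearMap.ker_eq_bot']
    intro u hu
    ext j
    by_contra hj
    exact hj (congrFun hu ⟨j, mem_filter.mpr ⟨mem_univ _, u, u.2, hj⟩⟩)
  simpa using LinearMap.finrank_le_finrank_of_injective hinj

def ghzQueries : Finset (Fin 3 → ZMod 2) := {q | q 0 + q 1 + q 2 = 0}

theorem card_ghzQueries : #ghzQueries = 4 := by decide

section
variable {n : ℕ} {j : Fin n}

open scoped Classical in
theorem locallyEmbeddable_of_card_fiber {T : Finset (Fin 3 → Fin n → ZMod 2)}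
    {α : Type*} {R : Finset α} (hR : R.Nonempty) (e : Fin 3 → ZMod 2 → α → Fin n → ZMod 2)
    (hcol : ∀ q ∈ ghzQueries, ∀ r ∈ R, ∀ i, e i (q i) r j = q i)
    (hlaw : ∀ x, (#{p ∈ ghzQueries ×ˢ R | (fun i => e i (p.1 i) p.2) = x} : ℝ) / (4 * #R) =
      if x ∈ T then 1 / (#T : ℝ) else 0) :
    LocallyEmbeddable n T j := by
  have hR : (0 : ℝ) < #R := by exact_mod_cast hR.card_pos
  let ε := R.equivFin.symm
  refine ⟨#R, fun _ => 1 / #R, fun i b r => e i b (ε r), fun _ => by positivity, ?_,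
    fun q hq r => hcol q (by simpa [ghzQueries] using hq) _ (ε r).2, fun x => ?_⟩
  · simp [hR.ne']
  have hsum : ∀ q : Fin 3 → ZMod 2, ∑ r : Fin #R,
      (if (fun i => e i (q i) (ε r)) = x then (1 / 4 : ℝ) * (1 / #R) else 0) =
      ∑ r ∈ R, if (fun i => e i (q i) r) = x then (1 / 4 : ℝ) * (1 / #R) else 0 := fun q =>
    (ε.sum_comp _).trans (sum_coe_sort R fun r => if (fun i => e i (q i) r) = x then _ else _)
  simp_rw [hsum]
  rw [← hlaw x, ← ghzQueries, ← sum_product', ← sum_filter, sum_const, nsmul_eq_mul]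
  field_simp

open scoped Classical in
/-- The support of `Qⁿ | W` for `W = v + V³`; `x i` is the `i`-th row. -/
noncomputable def ghzCosetSupport (V : Submodule (ZMod 2) (Fin n → ZMod 2))
    (v : Fin 3 → Fin n → ZMod 2) : Finset (Fin 3 → Fin n → ZMod 2) :=
  univ.filter fun x => (∀ j', x 0 j' + x 1 j' + x 2 j' = 0) ∧ ∀ i, x i - v i ∈ V

variable {V : Submodule (ZMod 2) (Fin n → ZMod 2)} {v : Fin 3 → Fin n → ZMod 2}
  {w : Fin n → ZMod 2}

theorem column_mem_ghzQueries {x : Fin 3 → Fin n → ZMod 2} (hx : x ∈ ghzCosetSupport V v)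
    (j : Fin n) : (fun i => x i j) ∈ ghzQueries := by
  simp only [ghzCosetSupport, mem_filter] at hx
  simpa [ghzQueries] using hx.2.1 j

theorem add_smul_mem_ghzCosetSupport {x : Fin 3 → Fin n → ZMod 2}
    (hx : x ∈ ghzCosetSupport V v) {a : Fin 3 → ZMod 2} (ha : a ∈ ghzQueries) (hw : w ∈ V) :
    (fun i => x i + a i • w) ∈ ghzCosetSupport V v := by
  simp only [ghzCosetSupport, mem_filter, mem_univ, true_and] at hx ⊢
  simp only [ghzQueries, mem_filter, mem_univ, true_and] at ha
  refine ⟨fun l => ?_, fun i => ?_⟩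
  · simp only [Pi.add_apply, Pi.smul_apply, smul_eq_mul]
    linear_combination hx.1 l + w l * ha
  · rw [add_sub_right_comm]
    exact V.add_mem (hx.2 i) (V.smul_mem _ hw)

def shear (j : Fin n) (w : Fin n → ZMod 2) (q : Fin 3 → ZMod 2)
    (x : Fin 3 → Fin n → ZMod 2) : Fin 3 → Fin n → ZMod 2 :=
  fun i => x i + (q i + x i j) • w

theorem shear_apply_self (hwj : w j = 1) (q x) (i : Fin 3) : shear j w q x i j = q i := by
  simp only [shear, Pi.add_apply, Pi.smul_apply, smul_eq_mul, hwj, mul_one]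
  linear_combination CharTwo.add_self_eq_zero (x i j)

theorem shear_shear (hwj : w j = 1) (q c x) : shear j w q (shear j w c x) = shear j w q x := by
  funext i
  change shear j w c x i + (q i + shear j w c x i j) • w = _
  rw [shear_apply_self hwj, shear, add_assoc, ← add_smul]
  congr 2
  linear_combination CharTwo.add_self_eq_zero (c i)

theorem shear_column (x : Fin 3 → Fin n → ZMod 2) : shear j w (fun i => x i j) x = x := by
  funext i
  simp [shear, CharTwo.add_self_eq_zero]

theorem shear_mem_ghzCosetSupport (hw : w ∈ V) {q} (hq : q ∈ ghzQueries) {x}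
    (hx : x ∈ ghzCosetSupport V v) :
    shear j w q x ∈ ghzCosetSupport V v := by
  refine add_smul_mem_ghzCosetSupport hx ?_ hw
  have := column_mem_ghzQueries hx j
  simp only [ghzQueries, mem_filter, mem_univ, true_and] at hq this ⊢
  linear_combination hq + this

open scoped Classical in
theorem card_shear_fiber (hw : w ∈ V) (hwj : w j = 1) (x : Fin 3 → Fin n → ZMod 2) :
    #{p ∈ ghzQueries ×ˢ ghzCosetSupport V v | shear j w p.1 p.2 = x} =
      if x ∈ ghzCosetSupport V v then 4 else 0 := by
  split_ifs with hx
  · rw [← card_ghzQueries]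
    refine card_nbij' (fun p i => p.2 i j) (fun c => ((fun i => x i j), shear j w c x)) ?_ ?_ ?_ ?_
    · intro p hp
      simp only [mem_coe, mem_filter, mem_product] at hp
      exact column_mem_ghzQueries hp.1.2 j
    · intro c hc
      simp only [mem_coe, mem_filter, mem_product]
      refine ⟨⟨column_mem_ghzQueries hx j, shear_mem_ghzCosetSupport hw hc hx⟩, ?_⟩
      rw [shear_shear hwj, shear_column]
    · rintro ⟨q, t⟩ hp
      simp only [mem_coe, mem_filter, mem_product] at hp
      obtain ⟨-, rfl⟩ := hp
      simp only [Prod.mk.injEq]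
      exact ⟨funext (shear_apply_self hwj q t), by rw [shear_shear hwj, shear_column]⟩
    · intro c _
      exact funext (shear_apply_self hwj c x)
  · rw [card_eq_zero, filter_eq_empty_iff]
    rintro ⟨q, t⟩ hp rfl
    rw [mem_product] at hp
    exact hx (shear_mem_ghzCosetSupport hw hp.1 hp.2)

theorem locallyEmbeddable_ghzCosetSupport (hS : (ghzCosetSupport V v).Nonempty) (hw : w ∈ V)
    (hwj : w j = 1) :
    LocallyEmbeddable n (ghzCosetSupport V v) j := by
  refine locallyEmbeddable_of_card_fiber hS (fun i b r => r i + (b + r i j) • w)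
    (fun q _ r _ i => shear_apply_self hwj q r i) fun x => ?_
  change (#{p ∈ ghzQueries ×ˢ ghzCosetSupport V v | shear j w p.1 p.2 = x} : ℝ) / _ = _
  rw [card_shear_fiber hw hwj]
  split_ifs
  · rw [Nat.cast_ofNat, one_div, div_mul_cancel_left₀ four_ne_zero]
  · simp

end

open scoped Classical in
theorem stmt_5_general (n m : ℕ)
    (V : Submodule (ZMod 2) (Fin n → ZMod 2))
    (hV : Module.finrank (ZMod 2) V = n - m)
    (v : Fin 3 → Fin n → ZMod 2)
    (T : Finset (Fin 3 → Fin n → ZMod 2))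
    (hT : T = Finset.univ.filter (fun x =>
      (∀ j' : Fin n, x 0 j' + x 1 j' + x 2 j' = 0) ∧
      (∀ i : Fin 3, x i - v i ∈ V)))
    (hTne : T.Nonempty) :
    ∃ J : Finset (Fin n), n - m ≤ J.card ∧
      ∀ j ∈ J, LocallyEmbeddable n T j := by
  obtain rfl : T = ghzCosetSupport V v := hT
  refine ⟨({j | ∃ w ∈ V, w j ≠ 0} : Finset _), hV ▸ V.finrank_le_card_support, fun j hj => ?_⟩
  obtain ⟨w, hw, hwj⟩ := (mem_filter.mp hj).2
  exact locallyEmbeddable_ghzCosetSupport hTne hw (Fin.eq_one_of_ne_zero _ hwj)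

open scoped Classical in
/-- If `W = v + V³` is an affine shift of `V³` for a subspace `V ≤ F₂ⁿ` of
codimension `m < n` with `Qⁿ(W) > 0`, then there are at least `n − m` coordinates
`j` in which the GHZ query distribution `Q` is locally embeddable into
`P̃ = Qⁿ | W`. -/
theorem stmt_5 (n m : ℕ) (hmn : m < n)
    (V : Submodule (ZMod 2) (Fin n → ZMod 2))
    (hV : Module.finrank (ZMod 2) V = n - m)
    (v : Fin 3 → Fin n → ZMod 2)
    (T : Finset (Fin 3 → Fin n → ZMod 2))
    (hT : T = Finset.univ.filter (fun x =>
      (∀ j' : Fin n, x 0 j' + x 1 j' + x 2 j' = 0) ∧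
      (∀ i : Fin 3, x i - v i ∈ V)))
    (hTne : T.Nonempty) :
    ∃ J : Finset (Fin n), n - m ≤ J.card ∧
      ∀ j ∈ J, LocallyEmbeddable n T j :=
  stmt_5_general n m V hV v T hT hTne
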